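/- arXiv:2304.09509 — 3 statements merged into one kernel-verified Lean document; each statement's English description precedes it below -/
import Mathlib

section
/- Let ℓ : ℝⁿ → [0,∞) be continuous and suppose 𝔐 := {x ∈ ℝⁿ : ℓ(x) = 0} is nonempty. Define v(x) := inf { ∫_0^t ℓ(y(s)) ds : t ≥ 0, y : [0,∞) → ℝⁿ Lipschitz with constant 1, y(0) = x, y(t) ∈ 𝔐 }. Then 0 ≤ v(x) < ∞ for every x ∈ ℝⁿ, v ≡ 0 on 𝔐, and at every point x̄ ∈ 𝔐 the function v is Fréchet differentiable with ∇v(x̄) = 0. Consequently, for every Borel probability measure m on ℝⁿ with supp(m) ⊆ 𝔐 and every φ ∈ C_c^∞(ℝⁿ), the gradient ∇v(x) exists for m-a.e. x and ∫_{ℝⁿ} ∇φ(x)·∇v(x) dm(x) = 0, i.e. m solves the transport (continuity) equation −div(m ∇v) = 0 in the sense of distributions. -/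
open MeasureTheory Set Filter Metric

noncomputable section

abbrev En (n : ℕ) : Type := EuclideanSpace ℝ (Fin n)
abbrev Pn (n : ℕ) : Type := MeasureTheory.ProbabilityMeasure (En n)

/-- Support of a probability measure. -/
def msupp {n : ℕ} (μ : Pn n) : Set (En n) := {x | ∀ U ∈ nhds x, μ.toMeasure U ≠ 0}

/-- The set of admissible costs for the generalized minimum-time problem with running cost `ℓ`
starting from `x`: costs `∫_0^t ℓ(y(s)) ds` of 1-Lipschitz curves `y` with `y 0 = x` reaching
the zero set of `ℓ` at some time `t ≥ 0`. -/
def reachCost {n : ℕ} (ℓ : En n → ℝ) (x : En n) : Set ℝ :=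
  {c | ∃ t : ℝ, 0 ≤ t ∧ ∃ y : ℝ → En n, LipschitzWith 1 y ∧ y 0 = x ∧ ℓ (y t) = 0 ∧
    c = ∫ s in (0:ℝ)..t, ℓ (y s)}

/-- The value function of the generalized minimum-time problem. -/
def vmin {n : ℕ} (ℓ : En n → ℝ) (x : En n) : ℝ := sInf (reachCost ℓ x)



lemma exists_curve {n : ℕ} (x z : En n) :
    ∃ y : ℝ → En n, LipschitzWith 1 y ∧ y 0 = x ∧ y (dist x z) = z ∧
      ∀ s, y s ∈ closedBall z (dist x z) := by
  rcases eq_or_ne x z with rfl | hxz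
  · exact ⟨fun _ => x, (LipschitzWith.const x).weaken (by norm_num), rfl, rfl, fun s => by simp⟩
  · set t := dist x z with ht
    have htpos : 0 < t := dist_pos.mpr hxz
    set f : ℝ → ℝ := fun s => max 0 (min s t) with hf
    have hfL : LipschitzWith 1 f := (LipschitzWith.id.min_const t).const_max 0
    have hf0 : ∀ s, 0 ≤ f s := fun s => le_max_left _ _
    have hft : ∀ s, f s ≤ t := fun s => max_le htpos.le (min_le_right _ _)
    have hw : ‖z - x‖ = t := by rw [ht, dist_comm, dist_eq_norm]
    refine ⟨fun s => x + (f s / t) • (z - x), ?_, ?_, ?_, ?_⟩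
    · apply LipschitzWith.of_dist_le_mul
      intro a b
      have : dist (x + (f a / t) • (z - x)) (x + (f b / t) • (z - x))
          = |f a - f b| / t * t := by
        rw [dist_add_left, dist_eq_norm, ← sub_smul, norm_smul, hw, ← sub_div,
          Real.norm_eq_abs, abs_div, abs_of_pos htpos]
      rw [this, div_mul_cancel₀ _ htpos.ne']
      have := hfL.dist_le_mul a b
      simpa [Real.dist_eq] using this
    · have : f 0 = 0 := by simp [hf, min_eq_left htpos.le]
      show x + (f 0 / t) • (z - x) = x
      simp [this]
    · show x + (f t / t) • (z - x) = z
      have hftt : f t = t := by simp [hf, htpos.le]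
      rw [hftt, div_self htpos.ne', one_smul]
      abel
    · intro s
      have hc0 : 0 ≤ f s / t := div_nonneg (hf0 s) htpos.le
      have hc1 : f s / t ≤ 1 := (div_le_one htpos).mpr (hft s)
      have : x + (f s / t) • (z - x) - z = (f s / t - 1) • (z - x) := by
        rw [sub_smul, one_smul]; abel
      rw [mem_closedBall, dist_eq_norm, this, norm_smul, hw, Real.norm_eq_abs,
        abs_of_nonpos (by linarith)]
      nlinarith

lemma reachCost_nonneg {n : ℕ} {ℓ : En n → ℝ} (hpos : ∀ x, 0 ≤ ℓ x) {x : En n} {c : ℝ}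
    (hc : c ∈ reachCost ℓ x) : 0 ≤ c := by
  obtain ⟨t, ht, y, hy, h0, hzt, rfl⟩ := hc
  exact intervalIntegral.integral_nonneg ht (fun s _ => hpos _)

lemma reachCost_bddBelow {n : ℕ} {ℓ : En n → ℝ} (hpos : ∀ x, 0 ≤ ℓ x) (x : En n) :
    BddBelow (reachCost ℓ x) := ⟨0, fun _ hc => reachCost_nonneg hpos hc⟩

lemma cost_mem_and_le {n : ℕ} {ℓ : En n → ℝ} (hcont : Continuous ℓ)
    (x z : En n) (hz : ℓ z = 0) :
    ∃ c ∈ reachCost ℓ x, ∀ ε : ℝ, (∀ w ∈ closedBall z (dist x z), ℓ w ≤ ε) →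
      c ≤ ε * dist x z := by
  obtain ⟨y, hy, hy0, hyt, hyball⟩ := exists_curve x z
  refine ⟨∫ s in (0:ℝ)..(dist x z), ℓ (y s), ⟨dist x z, dist_nonneg, y, hy, hy0,
    by rw [hyt, hz], rfl⟩, fun ε hε => ?_⟩
  have hint : IntervalIntegrable (fun s => ℓ (y s)) volume 0 (dist x z) :=
    (hcont.comp hy.continuous).intervalIntegrable _ _
  calc ∫ s in (0:ℝ)..(dist x z), ℓ (y s) ≤ ∫ _s in (0:ℝ)..(dist x z), ε :=
        intervalIntegral.integral_mono_on dist_nonneg hint (intervalIntegrable_const)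
          (fun s _ => hε _ (hyball s))
    _ = ε * dist x z := by simp [mul_comm]

lemma vmin_nonneg {n : ℕ} {ℓ : En n → ℝ} (hcont : Continuous ℓ) (hpos : ∀ x, 0 ≤ ℓ x)
    (hne : {x : En n | ℓ x = 0}.Nonempty) (x : En n) : 0 ≤ vmin ℓ x := by
  obtain ⟨z, hz⟩ := hne
  obtain ⟨c, hc, -⟩ := cost_mem_and_le hcont x z hz
  exact le_csInf ⟨c, hc⟩ (fun _ hb => reachCost_nonneg hpos hb)

lemma vmin_zero {n : ℕ} {ℓ : En n → ℝ} (hcont : Continuous ℓ) (hpos : ∀ x, 0 ≤ ℓ x)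
    {x : En n} (hx : ℓ x = 0) : vmin ℓ x = 0 := by
  have h0 : (0:ℝ) ∈ reachCost ℓ x :=
    ⟨0, le_refl 0, fun _ => x, (LipschitzWith.const x).weaken (by norm_num), rfl, hx,
      (intervalIntegral.integral_same).symm⟩
  exact le_antisymm (csInf_le (reachCost_bddBelow hpos x) h0)
    (vmin_nonneg hcont hpos ⟨x, hx⟩ x)

lemma vmin_gradient_zero {n : ℕ} {ℓ : En n → ℝ} (hcont : Continuous ℓ) (hpos : ∀ x, 0 ≤ ℓ x)
    {x₀ : En n} (hx₀ : ℓ x₀ = 0) : HasGradientAt (vmin ℓ) 0 x₀ := by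
  rw [hasGradientAt_iff_hasFDerivAt]
  rw [hasFDerivAt_iff_isLittleO_nhds_zero]
  rw [Asymptotics.isLittleO_iff]
  intro ε hε
  have hcx : ContinuousAt ℓ x₀ := hcont.continuousAt
  rw [Metric.continuousAt_iff] at hcx
  obtain ⟨δ, hδ, hδ'⟩ := hcx ε hε
  have hne : {x : En n | ℓ x = 0}.Nonempty := ⟨x₀, hx₀⟩
  rw [Metric.eventually_nhds_iff]
  refine ⟨δ, hδ, fun {h} hh => ?_⟩
  -- bound : vmin ℓ (x₀ + h) ≤ ε * dist (x₀ + h) x₀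
  obtain ⟨c, hc, hcle⟩ := cost_mem_and_le hcont (x₀ + h) x₀ hx₀
  have hd : dist (x₀ + h) x₀ = ‖h‖ := by simp [dist_eq_norm]
  have hball : ∀ w ∈ closedBall x₀ (dist (x₀ + h) x₀), ℓ w ≤ ε := by
    intro w hw
    rw [mem_closedBall, hd] at hw
    have : dist w x₀ < δ := lt_of_le_of_lt hw (by simpa using hh)
    have := hδ' this
    rw [Real.dist_eq, hx₀, sub_zero] at this
    exact le_of_lt (lt_of_le_of_lt (le_abs_self _) this)
  have hub : vmin ℓ (x₀ + h) ≤ ε * ‖h‖ := by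
    calc vmin ℓ (x₀ + h) ≤ c := csInf_le (reachCost_bddBelow hpos _) hc
      _ ≤ ε * dist (x₀ + h) x₀ := hcle ε hball
      _ = ε * ‖h‖ := by rw [hd]
  have hlb : 0 ≤ vmin ℓ (x₀ + h) := vmin_nonneg hcont hpos hne _
  have hv0 : vmin ℓ x₀ = 0 := vmin_zero hcont hpos hx₀
  simp only [hv0, map_zero, sub_zero, ContinuousLinearMap.zero_apply]
  rw [Real.norm_eq_abs, abs_of_nonneg hlb]
  exact hub



lemma ae_mem_msupp {n : ℕ} (m : Pn n) : ∀ᵐ x ∂(m : Measure (En n)), x ∈ msupp m := by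
  rw [ae_iff]
  apply measure_null_of_locally_null
  intro x hx
  simp only [msupp, mem_setOf_eq, not_forall] at hx
  obtain ⟨U, hU, hU0⟩ := hx
  exact ⟨U, mem_nhdsWithin_of_mem_nhds hU, by simpa using hU0⟩


/-- **Differentiability of the minimum-time value function on the target, and the
distributional continuity equation.** If `ℓ ≥ 0` is continuous with nonempty zero set `𝔐`,
then the value function `v` is finite (the admissible set is nonempty) and nonnegative,
vanishes on `𝔐`, and is (Fréchet) differentiable at every point of `𝔐` with zero gradient.
Consequently, every probability measure `m` supported in `𝔐` satisfies: `∇v` exists `m`-a.e.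
and `∫ ∇φ · ∇v dm = 0` for every test function `φ ∈ C_c^∞(ℝⁿ)`, i.e. `−div(m ∇v) = 0` in the
sense of distributions. -/
theorem minimum_time_value_and_continuity_equation {n : ℕ} (ℓ : En n → ℝ)
    (hcont : Continuous ℓ) (hpos : ∀ x, 0 ≤ ℓ x) (hne : {x : En n | ℓ x = 0}.Nonempty) :
    (∀ x : En n, (reachCost ℓ x).Nonempty ∧ 0 ≤ vmin ℓ x) ∧
    (∀ x ∈ {x : En n | ℓ x = 0}, vmin ℓ x = 0) ∧
    (∀ x ∈ {x : En n | ℓ x = 0}, HasGradientAt (vmin ℓ) 0 x) ∧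
    (∀ m : Pn n, msupp m ⊆ {x : En n | ℓ x = 0} →
      (∀ᵐ x ∂(m : Measure (En n)), DifferentiableAt ℝ (vmin ℓ) x) ∧
      ∀ φ : En n → ℝ, ContDiff ℝ (⊤ : ℕ∞) φ → HasCompactSupport φ →
        (∫ x, (inner ℝ (gradient φ x) (gradient (vmin ℓ) x) : ℝ) ∂(m : Measure (En n))) = 0) := by
  obtain ⟨z, hz⟩ := hne
  refine ⟨fun x => ?_, fun x hx => vmin_zero hcont hpos hx,
    fun x hx => vmin_gradient_zero hcont hpos hx, fun m hm => ?_⟩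
  · obtain ⟨c, hc, -⟩ := cost_mem_and_le hcont x z hz
    exact ⟨⟨c, hc⟩, vmin_nonneg hcont hpos ⟨z, hz⟩ x⟩
  · have hae := ae_mem_msupp m
    constructor
    · filter_upwards [hae] with x hx
      exact (vmin_gradient_zero hcont hpos (hm hx)).differentiableAt
    · intro φ _ _
      have : ∀ᵐ x ∂(m : Measure (En n)),
          (inner ℝ (gradient φ x) (gradient (vmin ℓ) x) : ℝ) = 0 := by
        filter_upwards [hae] with x hx
        rw [(vmin_gradient_zero hcont hpos (hm hx)).gradient, inner_zero_right]
      rw [integral_congr_ae this, integral_zero]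
end
end

section
/- Let F : ℝⁿ × P(ℝⁿ) → ℝ be bounded, continuous in x for each μ and weakly continuous in μ for each x; set c(μ) := inf_{z∈ℝⁿ} F(z,μ) and C_F := sup_{z,μ} (F(z,μ) − c(μ)). Let 𝒜 ⊆ ℝⁿ be nonempty and closed with F(a,μ) = c(μ) for every a ∈ 𝒜 and every μ ∈ P(ℝⁿ). Let T > 0, let m : [0,T] → P(ℝⁿ) be narrowly continuous, and let u be the associated value function. Then for every x ∈ ℝⁿ and t ∈ [0,T]: ∫_t^T c(m(s)) ds ≤ u(x,t) ≤ (1/2 + C_F)·dist(x,𝒜) + ∫_t^T c(m(s)) ds. In particular u(x̄,t) = ∫_t^T c(m(s)) ds for every x̄ ∈ 𝒜. -/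
/-! The lower bound holds curve by curve, since the kinetic term is nonnegative and `F ≥ c`
pointwise; what needs care is that the action integrand is integrable, which follows from the
boundedness of `F` and the Carathéodory measurability of `s ↦ F (y s) (m s)`.
For the upper bound, given `a ∈ 𝒜`, run at unit speed along the segment from `x` to `a` and then
stay at `a`: while moving, the running cost exceeds `c (m s)` by at most `1/2 + C_F`, afterwards it
equals `c (m s)`. Optimizing over `a ∈ 𝒜` turns `dist x a` into `infDist x 𝒜`. -/

open MeasureTheory Set Filter Metric

noncomputable section

/-- Action functional on the time interval `[t,T]`. -/
def action {n : ℕ} (F : En n → Pn n → ℝ) (m : ℝ → Pn n) (t T : ℝ) (y : ℝ → En n) : ℝ :=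
  ∫ s in t..T, (‖deriv y s‖ ^ 2 / 2 + F (y s) (m s))

/-- Admissible curves on `[t,T]` starting at `x`. -/
def Adm {n : ℕ} (t T : ℝ) (x : En n) (y : ℝ → En n) : Prop :=
  (∃ L : NNReal, LipschitzOnWith L y (Set.Icc t T)) ∧ y t = x

/-- Value function of the optimal control problem with horizon `T` and measure flow `m`. -/
def valueFun {n : ℕ} (F : En n → Pn n → ℝ) (m : ℝ → Pn n) (T : ℝ) (x : En n) (t : ℝ) : ℝ :=
  sInf {c | ∃ y : ℝ → En n, Adm t T x y ∧ c = action F m t T y}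

/-- `cmin F μ` is the infimum of `F (·, μ)`. -/
def cmin {n : ℕ} (F : En n → Pn n → ℝ) (μ : Pn n) : ℝ := ⨅ z : En n, F z μ

open Topology

theorem aestronglyMeasurable_apply_of_continuous_of_stronglyMeasurable
    {α β E : Type*} [MeasurableSpace α] {μ : Measure α}
    [TopologicalSpace E] [TopologicalSpace.MetrizableSpace E] [MeasurableSpace E]
    [SecondCountableTopology E] [OpensMeasurableSpace E]
    [TopologicalSpace β] [TopologicalSpace.PseudoMetrizableSpace β]
    {f : E → α → β} (hf_cont : ∀ s, Continuous fun z => f z s)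
    (hf_meas : ∀ z, StronglyMeasurable (f z)) {y : α → E} (hy : AEMeasurable y μ) :
    AEStronglyMeasurable (fun s => f (y s) s) μ :=
  (stronglyMeasurable_uncurry_of_continuous_of_stronglyMeasurable hf_cont
    hf_meas).aestronglyMeasurable.comp_aemeasurable (hy.prodMk aemeasurable_id)

theorem ContinuousOn.exists_continuous_eqOn_Icc {α : Type*} [TopologicalSpace α] {f : ℝ → α}
    {a b : ℝ} (hab : a ≤ b) (hf : ContinuousOn f (Icc a b)) :
    ∃ g : ℝ → α, Continuous g ∧ EqOn g f (Icc a b) :=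
  ⟨fun s => f (projIcc a b hab s),
    hf.comp_continuous (continuous_subtype_val.comp continuous_projIcc) fun s =>
      (projIcc a b hab s).2,
    fun s hs => by simp [projIcc_of_mem hab hs]⟩

lemma intervalIntegral_indicator_Ioc_const_le {t T d c : ℝ} (htT : t ≤ T) (hc : 0 ≤ c)
    (hd : 0 ≤ d) : ∫ s in t..T, (Ioc t (t + d)).indicator (fun _ => c) s ≤ c * d := by
  rw [intervalIntegral.integral_of_le htT, setIntegral_indicator measurableSet_Ioc,
    setIntegral_const, smul_eq_mul, mul_comm]
  gcongr
  calc volume.real (Ioc t T ∩ Ioc t (t + d)) ≤ volume.real (Ioc t (t + d)) :=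
        measureReal_mono inter_subset_right measure_Ioc_lt_top.ne
    _ = d := by simp [hd]

section ApproachCurve

variable {E : Type*} [NormedAddCommGroup E] [NormedSpace ℝ E]

/-- For `x = a` the factor `(dist x a)⁻¹` is `0`, so the curve is then constant. -/
def approachCurve (x a : E) (t s : ℝ) : E :=
  x + min (s - t) (dist x a) • (dist x a)⁻¹ • (a - x)

variable (x a : E) (t : ℝ)

@[simp]
lemma approachCurve_self : approachCurve x a t t = x := by
  simp [approachCurve]

lemma approachCurve_of_le {s : ℝ} (hs : t + dist x a ≤ s) : approachCurve x a t s = a := by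
  rcases eq_or_ne (dist x a) 0 with h | h
  · simp [approachCurve, dist_eq_zero.1 h]
  · rw [approachCurve, min_eq_right (by linarith), smul_inv_smul₀ h, add_sub_cancel]

lemma lipschitzWith_approachCurve : LipschitzWith 1 (approachCurve x a t) := by
  have hv : ‖(dist x a)⁻¹ • (a - x)‖ ≤ 1 := by
    rw [norm_smul, norm_inv, Real.norm_eq_abs, abs_dist, ← dist_eq_norm', dist_comm]
    exact inv_mul_le_one
  refine LipschitzWith.of_dist_le_mul fun s₁ s₂ => ?_
  rw [dist_eq_norm, approachCurve, approachCurve, add_sub_add_left_eq_sub, ← sub_smul, norm_smul,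
    NNReal.coe_one, one_mul, Real.dist_eq]
  calc ‖min (s₁ - t) (dist x a) - min (s₂ - t) (dist x a)‖ * ‖(dist x a)⁻¹ • (a - x)‖
      ≤ |s₁ - s₂| * 1 := by
        gcongr
        simpa using abs_min_sub_min_le_max (s₁ - t) (dist x a) (s₂ - t) (dist x a)
    _ = |s₁ - s₂| := mul_one _

lemma deriv_approachCurve_of_lt {s : ℝ} (hs : t + dist x a < s) :
    deriv (approachCurve x a t) s = 0 := by
  have hconst : approachCurve x a t =ᶠ[𝓝 s] fun _ => a :=
    eventually_of_mem (Ioi_mem_nhds hs) fun r hr => approachCurve_of_le x a t (le_of_lt hr)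
  rw [hconst.deriv_eq, deriv_const]

end ApproachCurve

section ValueFunction

variable {n : ℕ} {F : En n → Pn n → ℝ} {M : ℝ}

lemma bddBelow_range_of_abs_le (hM : ∀ x μ, |F x μ| ≤ M) (μ : Pn n) :
    BddBelow (range fun z => F z μ) :=
  ⟨-M, by rintro _ ⟨z, rfl⟩; exact (abs_le.1 (hM z μ)).1⟩

lemma cmin_le (hM : ∀ x μ, |F x μ| ≤ M) (z : En n) (μ : Pn n) : cmin F μ ≤ F z μ :=
  ciInf_le (bddBelow_range_of_abs_le hM μ) z

lemma abs_cmin_le (hM : ∀ x μ, |F x μ| ≤ M) (μ : Pn n) : |cmin F μ| ≤ M :=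
  abs_le.2 ⟨le_ciInf fun z => (abs_le.1 (hM z μ)).1,
    (cmin_le hM 0 μ).trans (abs_le.1 (hM 0 μ)).2⟩

lemma upperSemicontinuous_cmin (hM : ∀ x μ, |F x μ| ≤ M)
    (hFm : ∀ x, Continuous fun μ : Pn n => F x μ) : UpperSemicontinuous (cmin F) :=
  upperSemicontinuous_ciInf (bddBelow_range_of_abs_le hM) fun z => (hFm z).upperSemicontinuous

variable {m : ℝ → Pn n} {t T : ℝ}

lemma intervalIntegrable_cmin (hM : ∀ x μ, |F x μ| ≤ M)
    (hFm : ∀ x, Continuous fun μ : Pn n => F x μ) (htT : t ≤ T) (hm : ContinuousOn m (Icc t T)) :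
    IntervalIntegrable (fun s => cmin F (m s)) volume t T := by
  obtain ⟨mc, hmc, hmc_eq⟩ := hm.exists_continuous_eqOn_Icc htT
  have hmeas : AEStronglyMeasurable (fun s => cmin F (m s)) (volume.restrict (Icc t T)) :=
    ((upperSemicontinuous_cmin hM hFm).comp hmc).measurable.aestronglyMeasurable.congr
      ((ae_restrict_iff' measurableSet_Icc).2
        (ae_of_all _ fun s hs => congrArg (cmin F) (hmc_eq hs)))
  rw [intervalIntegrable_iff_integrableOn_Icc_of_le htT]
  exact (integrableOn_const measure_Icc_lt_top.ne).mono' hmeas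
    (ae_of_all _ fun s => abs_cmin_le hM (m s))

lemma aestronglyMeasurable_comp_curve (hFx : ∀ μ, Continuous fun x => F x μ)
    (hFm : ∀ x, Continuous fun μ : Pn n => F x μ) (htT : t ≤ T) (hm : ContinuousOn m (Icc t T))
    {y : ℝ → En n} (hy : ContinuousOn y (Icc t T)) :
    AEStronglyMeasurable (fun s => F (y s) (m s)) (volume.restrict (Icc t T)) := by
  obtain ⟨mc, hmc, hmc_eq⟩ := hm.exists_continuous_eqOn_Icc htT
  refine (aestronglyMeasurable_apply_of_continuous_of_stronglyMeasurable
    (f := fun z s => F z (mc s)) (fun s => hFx (mc s))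
    (fun z => ((hFm z).comp hmc).stronglyMeasurable)
    (hy.aemeasurable measurableSet_Icc)).congr ?_
  exact (ae_restrict_iff' measurableSet_Icc).2
    (ae_of_all _ fun s hs => by simp only [hmc_eq hs])

lemma intervalIntegrable_lagrangian (hM : ∀ x μ, |F x μ| ≤ M)
    (hFx : ∀ μ, Continuous fun x => F x μ) (hFm : ∀ x, Continuous fun μ : Pn n => F x μ)
    (htT : t ≤ T) (hm : ContinuousOn m (Icc t T)) {y : ℝ → En n} {L : NNReal}
    (hy : LipschitzOnWith L y (Icc t T)) :
    IntervalIntegrable (fun s => ‖deriv y s‖ ^ 2 / 2 + F (y s) (m s)) volume t T := by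
  have hmeas : AEStronglyMeasurable (fun s => ‖deriv y s‖ ^ 2 / 2 + F (y s) (m s))
      (volume.restrict (Ioo t T)) :=
    ((measurable_deriv y).norm.pow_const 2 |>.div_const 2).aestronglyMeasurable.add
      ((aestronglyMeasurable_comp_curve hFx hFm htT hm hy.continuousOn).mono_set
        Ioo_subset_Icc_self)
  rw [intervalIntegrable_iff_integrableOn_Ioo_of_le htT]
  refine (integrableOn_const (C := (L : ℝ) ^ 2 / 2 + M) measure_Ioo_lt_top.ne).mono' hmeas
    ((ae_restrict_mem measurableSet_Ioo).mono fun s hs => ?_)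
  have hderiv : ‖deriv y s‖ ≤ L := norm_deriv_le_of_lipschitzOn (Icc_mem_nhds hs.1 hs.2) hy
  calc ‖‖deriv y s‖ ^ 2 / 2 + F (y s) (m s)‖ ≤ ‖deriv y s‖ ^ 2 / 2 + |F (y s) (m s)| := by
        rw [Real.norm_eq_abs]
        exact (abs_add_le _ _).trans_eq (by rw [abs_of_nonneg (by positivity)])
    _ ≤ (L : ℝ) ^ 2 / 2 + M := by gcongr; exact hM _ _

variable {x : En n}

lemma integral_cmin_le_action (hM : ∀ x μ, |F x μ| ≤ M)
    (hFx : ∀ μ, Continuous fun x => F x μ) (hFm : ∀ x, Continuous fun μ : Pn n => F x μ)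
    (htT : t ≤ T) (hm : ContinuousOn m (Icc t T)) {y : ℝ → En n} (hy : Adm t T x y) :
    ∫ s in t..T, cmin F (m s) ≤ action F m t T y := by
  obtain ⟨⟨L, hL⟩, -⟩ := hy
  refine intervalIntegral.integral_mono_on htT (intervalIntegrable_cmin hM hFm htT hm)
    (intervalIntegrable_lagrangian hM hFx hFm htT hm hL) fun s _ => ?_
  linarith [cmin_le hM (y s) (m s), sq_nonneg ‖deriv y s‖]

lemma adm_const (t T : ℝ) (x : En n) : Adm t T x fun _ => x :=
  ⟨⟨0, (LipschitzWith.const x).lipschitzOnWith⟩, rfl⟩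

lemma integral_cmin_le_valueFun (hM : ∀ x μ, |F x μ| ≤ M)
    (hFx : ∀ μ, Continuous fun x => F x μ) (hFm : ∀ x, Continuous fun μ : Pn n => F x μ)
    (htT : t ≤ T) (hm : ContinuousOn m (Icc t T)) :
    ∫ s in t..T, cmin F (m s) ≤ valueFun F m T x t :=
  le_csInf ⟨_, _, adm_const t T x, rfl⟩ fun _ ⟨_, hy, hc⟩ =>
    hc ▸ integral_cmin_le_action hM hFx hFm htT hm hy

lemma valueFun_le_action (hM : ∀ x μ, |F x μ| ≤ M)
    (hFx : ∀ μ, Continuous fun x => F x μ) (hFm : ∀ x, Continuous fun μ : Pn n => F x μ)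
    (htT : t ≤ T) (hm : ContinuousOn m (Icc t T)) {y : ℝ → En n} (hy : Adm t T x y) :
    valueFun F m T x t ≤ action F m t T y :=
  csInf_le ⟨_, fun _ ⟨_, hy, hc⟩ => hc ▸ integral_cmin_le_action hM hFx hFm htT hm hy⟩
    ⟨y, hy, rfl⟩

variable {C_F : ℝ}

lemma action_approachCurve_le (hM : ∀ x μ, |F x μ| ≤ M)
    (hFx : ∀ μ, Continuous fun x => F x μ) (hFm : ∀ x, Continuous fun μ : Pn n => F x μ)
    (htT : t ≤ T) (hm : ContinuousOn m (Icc t T)) (hCF : ∀ z μ, F z μ - cmin F μ ≤ C_F)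
    {a : En n} (ha : ∀ μ, F a μ = cmin F μ) :
    action F m t T (approachCurve x a t) ≤
      (1/2 + C_F) * dist x a + ∫ s in t..T, cmin F (m s) := by
  set d := dist x a
  set γ := approachCurve x a t
  have hCF_nonneg : 0 ≤ C_F := by simpa [ha] using hCF a (m t)
  have hcmin := intervalIntegrable_cmin hM hFm htT hm
  set bump := (Ioc t (t + d)).indicator fun _ => 1/2 + C_F
  have hbump : IntervalIntegrable bump volume t T :=
    (intervalIntegrable_iff_integrableOn_Ioc_of_le htT).2
      ((integrableOn_const measure_Ioc_lt_top.ne).indicator measurableSet_Ioc)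
  have hpointwise : ∀ s ∈ Ioo t T, ‖deriv γ s‖ ^ 2 / 2 + F (γ s) (m s) ≤ cmin F (m s) + bump s := by
    intro s hs
    rcases le_or_gt s (t + d) with hsd | hsd
    · have hspeed : ‖deriv γ s‖ ^ 2 ≤ 1 :=
        pow_le_one₀ (norm_nonneg _) (norm_deriv_le_of_lipschitz (lipschitzWith_approachCurve x a t))
      have hbump_s : bump s = 1/2 + C_F := indicator_of_mem (show s ∈ Ioc t (t + d) from ⟨hs.1, hsd⟩) _
      linarith [hCF (γ s) (m s)]
    · have hbump_s : bump s = 0 := indicator_of_notMem (fun h => (h.2.trans_lt hsd).false) _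
      have hstill : deriv γ s = 0 := deriv_approachCurve_of_lt x a t hsd
      have harrived : γ s = a := approachCurve_of_le x a t hsd.le
      simp [hbump_s, hstill, harrived, ha]
  calc action F m t T γ
      ≤ ∫ s in t..T, (cmin F (m s) + bump s) :=
        intervalIntegral.integral_mono_on_of_le_Ioo htT
          (intervalIntegrable_lagrangian hM hFx hFm htT hm
            (lipschitzWith_approachCurve x a t).lipschitzOnWith) (hcmin.add hbump) hpointwise
    _ = (∫ s in t..T, cmin F (m s)) + ∫ s in t..T, bump s :=
        intervalIntegral.integral_add hcmin hbump
    _ ≤ (1/2 + C_F) * d + ∫ s in t..T, cmin F (m s) := by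
        linarith [intervalIntegral_indicator_Ioc_const_le htT (by linarith : (0 : ℝ) ≤ 1/2 + C_F)
          (dist_nonneg : 0 ≤ d)]

lemma valueFun_le_dist_add_integral (hM : ∀ x μ, |F x μ| ≤ M)
    (hFx : ∀ μ, Continuous fun x => F x μ) (hFm : ∀ x, Continuous fun μ : Pn n => F x μ)
    (htT : t ≤ T) (hm : ContinuousOn m (Icc t T)) (hCF : ∀ z μ, F z μ - cmin F μ ≤ C_F)
    {a : En n} (ha : ∀ μ, F a μ = cmin F μ) :
    valueFun F m T x t ≤ (1/2 + C_F) * dist x a + ∫ s in t..T, cmin F (m s) :=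
  (valueFun_le_action hM hFx hFm htT hm
    ⟨⟨1, (lipschitzWith_approachCurve x a t).lipschitzOnWith⟩, approachCurve_self x a t⟩).trans
    (action_approachCurve_le hM hFx hFm htT hm hCF ha)

lemma valueFun_le_infDist_add_integral (hM : ∀ x μ, |F x μ| ≤ M)
    (hFx : ∀ μ, Continuous fun x => F x μ) (hFm : ∀ x, Continuous fun μ : Pn n => F x μ)
    (htT : t ≤ T) (hm : ContinuousOn m (Icc t T)) (hCF : ∀ z μ, F z μ - cmin F μ ≤ C_F)
    {𝒜 : Set (En n)} (hA_ne : 𝒜.Nonempty) (hA_min : ∀ a ∈ 𝒜, ∀ μ, F a μ = cmin F μ) :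
    valueFun F m T x t ≤ (1/2 + C_F) * infDist x 𝒜 + ∫ s in t..T, cmin F (m s) := by
  obtain ⟨a₀, ha₀⟩ := hA_ne
  have hCF_nonneg : 0 ≤ C_F := by simpa [hA_min a₀ ha₀] using hCF a₀ (m t)
  have hrate : 0 < 1/2 + C_F := by linarith
  have hdist : (valueFun F m T x t - ∫ s in t..T, cmin F (m s)) / (1/2 + C_F) ≤ infDist x 𝒜 :=
    (le_infDist ⟨a₀, ha₀⟩).2 fun a ha => by
      rw [div_le_iff₀ hrate]
      linarith [valueFun_le_dist_add_integral (x := x) hM hFx hFm htT hm hCF (hA_min a ha)]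
  rw [div_le_iff₀ hrate] at hdist
  linarith

end ValueFunction

theorem value_function_bounds_common_argmin_general {n : ℕ} (F : En n → Pn n → ℝ)
    (M : ℝ) (hM : ∀ (x : En n) (μ : Pn n), |F x μ| ≤ M)
    (hFx : ∀ μ : Pn n, Continuous fun x => F x μ)
    (hFm : ∀ x : En n, Continuous fun μ : Pn n => F x μ)
    (C_F : ℝ) (hCF : ∀ (z : En n) (μ : Pn n), F z μ - cmin F μ ≤ C_F)
    (𝒜 : Set (En n)) (hA_ne : 𝒜.Nonempty)
    (hA_min : ∀ a ∈ 𝒜, ∀ μ : Pn n, F a μ = cmin F μ)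
    (T : ℝ)
    (m : ℝ → Pn n) (hm : ContinuousOn m (Set.Icc 0 T)) :
    ∀ (x : En n) (t : ℝ), t ∈ Set.Icc (0:ℝ) T →
      ((∫ s in t..T, cmin F (m s)) ≤ valueFun F m T x t ∧
        valueFun F m T x t ≤
          (1/2 + C_F) * Metric.infDist x 𝒜 + ∫ s in t..T, cmin F (m s)) ∧
      (x ∈ 𝒜 → valueFun F m T x t = ∫ s in t..T, cmin F (m s)) := by
  intro x t ⟨ht0, htT⟩
  have hm' : ContinuousOn m (Icc t T) := hm.mono (Icc_subset_Icc_left ht0)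
  have hlower := integral_cmin_le_valueFun (x := x) hM hFx hFm htT hm'
  have hupper := valueFun_le_infDist_add_integral (x := x) hM hFx hFm htT hm' hCF hA_ne hA_min
  refine ⟨⟨hlower, hupper⟩, fun hx => hlower.antisymm' ?_⟩
  simpa [infDist_zero_of_mem hx] using hupper

/-- **Two-sided bounds for the value function in the presence of a common minimizing set.**
With `c(μ) = inf_z F(z,μ)`, `F(z,μ) − c(μ) ≤ C_F`, and a nonempty closed set `𝒜` on which
`F(a,μ) = c(μ)` for every `μ`, the value function satisfies
`∫_t^T c(m(s)) ds ≤ u(x,t) ≤ (1/2 + C_F)·dist(x,𝒜) + ∫_t^T c(m(s)) ds`;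
in particular `u(x̄,t) = ∫_t^T c(m(s)) ds` for `x̄ ∈ 𝒜`. -/
theorem value_function_bounds_common_argmin {n : ℕ} (F : En n → Pn n → ℝ)
    (M : ℝ) (hM : ∀ (x : En n) (μ : Pn n), |F x μ| ≤ M)
    (hFx : ∀ μ : Pn n, Continuous fun x => F x μ)
    (hFm : ∀ x : En n, Continuous fun μ : Pn n => F x μ)
    (C_F : ℝ) (hCF : ∀ (z : En n) (μ : Pn n), F z μ - cmin F μ ≤ C_F)
    (𝒜 : Set (En n)) (hA_ne : 𝒜.Nonempty) (hA_closed : IsClosed 𝒜)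
    (hA_min : ∀ a ∈ 𝒜, ∀ μ : Pn n, F a μ = cmin F μ)
    (T : ℝ) (hT : 0 < T)
    (m : ℝ → Pn n) (hm : ContinuousOn m (Set.Icc 0 T)) :
    ∀ (x : En n) (t : ℝ), t ∈ Set.Icc (0:ℝ) T →
      ((∫ s in t..T, cmin F (m s)) ≤ valueFun F m T x t ∧
        valueFun F m T x t ≤
          (1/2 + C_F) * Metric.infDist x 𝒜 + ∫ s in t..T, cmin F (m s)) ∧
      (x ∈ 𝒜 → valueFun F m T x t = ∫ s in t..T, cmin F (m s)) :=
  value_function_bounds_common_argmin_general F M hM hFx hFm C_F hCF 𝒜 hA_ne hA_min T m hm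
end
end

section
/- Under the standing assumptions, suppose 𝒜 = {x_*} is a singleton. Then for every s₀ ∈ (0,1], lim_{T→∞} ∫_{ℝⁿ} |x − x_*| d(m^T(sT))(x) = 0 uniformly for s ∈ [s₀, 1]. (This integral equals the Kantorovich–Rubinstein distance d₁(m^T(sT), δ_{x_*}) to the Dirac mass at x_*; in particular m^T(sT) converges to δ_{x_*} in d₁, locally uniformly in s ∈ (0,1].) -/
/-!
Since `xstar` minimises `F (·, μ)` for every `μ`, an optimal curve pays at least `γ r` per unit
time in excess of the running minimum cost `F xstar (m u)` while it stays farther than `r` from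
`xstar`. The competitor that leaves the curve at time `t₀`, runs straight to `xstar` in time `τ`
at speed at most `V` and stays there pays at most `(V ^ 2 / 2 + 2 M) τ` in excess. Comparing the
two, an optimal curve starting in `K₀` comes within `r₁` of `xstar` before a time `T₀` that does
not depend on `T`, and afterwards can only spend a time `O(r₁)` farther than `r₂` from `xstar`;
the uniform Lipschitz bound then keeps it within `r₂ + O(r₁)` of `xstar`. The bound passes to
`m T (s * T)`, the push-forward of `m₀` under the optimal curves, once `s * T ≥ T₀`.
-/

open MeasureTheory Set Filter Metric

noncomputable section

/-- A Lagrangian equilibrium of the finite-horizon mean field game. -/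
def IsEquilibrium {n : ℕ} (F : En n → Pn n → ℝ) (K₀ : Set (En n)) (m₀ : Pn n) (T : ℝ)
    (m : ℝ → Pn n) (Φ : En n → ℝ → En n) : Prop :=
  ContinuousOn m (Set.Icc 0 T) ∧
  (∀ x ∈ K₀, Adm 0 T x (Φ x) ∧
    ∀ y : ℝ → En n, Adm 0 T x y → action F m 0 T (Φ x) ≤ action F m 0 T y) ∧
  (∀ s ∈ Set.Icc (0:ℝ) T,
    (m s : Measure (En n)) = Measure.map (fun x => Φ x s) (m₀ : Measure (En n)))

open scoped Topology NNReal

section Measurability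

variable {α X P : Type*} [TopologicalSpace α] [MeasurableSpace α] [OpensMeasurableSpace α]
  [TopologicalSpace X] [TopologicalSpace.MetrizableSpace X] [SecondCountableTopology X]
  [MeasurableSpace X] [BorelSpace X] [TopologicalSpace P]

theorem aestronglyMeasurable_comp_of_continuous_separately {F : X → P → ℝ}
    (hFx : ∀ μ, Continuous fun x => F x μ) (hFm : ∀ x, Continuous (F x))
    {μ : Measure α} {s : Set α} (hs : MeasurableSet s) {ψ : α → X} {m : α → P}
    (hψ : ContinuousOn ψ s) (hm : ContinuousOn m s) :
    AEStronglyMeasurable (fun u => F (ψ u) (m u)) (μ.restrict s) := by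
  have hjoint : StronglyMeasurable (Function.uncurry fun x (u : s) => F x (m u)) :=
    stronglyMeasurable_uncurry_of_continuous_of_stronglyMeasurable (fun u => hFx (m u))
      (fun x => ((hFm x).comp hm.domRestrict).stronglyMeasurable)
  have hcomp : StronglyMeasurable fun u : s => F (ψ u) (m u) :=
    hjoint.comp_measurable (hψ.domRestrict.measurable.prodMk measurable_id)
  rw [← map_comap_subtype_coe hs, (MeasurableEmbedding.subtype_coe hs).aestronglyMeasurable_map_iff]
  exact hcomp.aestronglyMeasurable

end Measurability

theorem exists_le_forall_lt_of_continuousOn {f : ℝ → ℝ} {a b r : ℝ}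
    (hf : ContinuousOn f (Icc a b)) (hab : a ≤ b) (ha : f a ≤ r) :
    ∃ g ∈ Icc a b, f g ≤ r ∧ ∀ u ∈ Ioc g b, r < f u := by
  have hS : IsCompact (Icc a b ∩ f ⁻¹' Iic r) :=
    isCompact_Icc.of_isClosed_subset (hf.preimage_isClosed_of_isClosed isClosed_Icc isClosed_Iic)
      inter_subset_left
  obtain ⟨g, ⟨hg, hgr⟩, hmax⟩ := hS.exists_isGreatest ⟨a, ⟨left_mem_Icc.2 hab, ha⟩⟩
  refine ⟨g, hg, hgr, fun u hu => lt_of_not_ge fun hur => ?_⟩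
  exact (hmax ⟨⟨hg.1.trans hu.1.le, hu.2⟩, hur⟩).not_gt hu.1

section Lagrangian

variable {E P : Type*} [NormedAddCommGroup E] [NormedSpace ℝ E]

/-- `action F m t T y` is `∫ u in t..T, lagrangian F m y u` by definition. -/
def lagrangian (F : E → P → ℝ) (m : ℝ → P) (y : ℝ → E) (u : ℝ) : ℝ :=
  ‖deriv y u‖ ^ 2 / 2 + F (y u) (m u)

theorem intervalIntegrable_lagrangian_s15 [CompleteSpace E] [MeasurableSpace E] [BorelSpace E]
    [SecondCountableTopology E] [TopologicalSpace P] {F : E → P → ℝ} {M : ℝ}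
    (hM : ∀ x μ, |F x μ| ≤ M) (hFx : ∀ μ, Continuous fun x => F x μ)
    (hFm : ∀ x, Continuous (F x)) {m : ℝ → P} {y : ℝ → E} {L : ℝ≥0} {a b : ℝ} (hab : a ≤ b)
    (hm : ContinuousOn m (Icc a b)) (hy : LipschitzOnWith L y (Icc a b)) :
    IntervalIntegrable (lagrangian F m y) volume a b := by
  rw [intervalIntegrable_iff_integrableOn_Ioo_of_le hab]
  refine .of_bound measure_Ioo_lt_top ?_ (L ^ 2 / 2 + M) ?_
  · exact ((measurable_deriv y).norm.pow_const 2 |>.div_const 2).aestronglyMeasurable.add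
      (aestronglyMeasurable_comp_of_continuous_separately hFx hFm measurableSet_Ioo
        (hy.continuousOn.mono Ioo_subset_Icc_self) (hm.mono Ioo_subset_Icc_self))
  · refine ae_restrict_of_forall_mem measurableSet_Ioo fun u hu => ?_
    have hderiv : ‖deriv y u‖ ≤ L := norm_deriv_le_of_lipschitzOn (Icc_mem_nhds hu.1 hu.2) hy
    have hF := abs_le.1 (hM (y u) (m u))
    rw [lagrangian, Real.norm_eq_abs, abs_le]
    constructor <;> nlinarith [norm_nonneg (deriv y u)]

end Lagrangian

section Reroute

variable {E : Type*} [NormedAddCommGroup E] [NormedSpace ℝ E] {y : ℝ → E} {t₀ τ u : ℝ} {z : E}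

def reroute (y : ℝ → E) (t₀ τ : ℝ) (z : E) (u : ℝ) : E :=
  y (min u t₀) + (max t₀ (min u (t₀ + τ)) - t₀) • τ⁻¹ • (z - y t₀)

theorem reroute_of_le (hu : u ≤ t₀) : reroute y t₀ τ z u = y u := by
  have hclamp : max t₀ (min u (t₀ + τ)) = t₀ := max_eq_left ((min_le_left _ _).trans hu)
  simp [reroute, min_eq_left hu, hclamp]

theorem reroute_of_mem_Icc (hu : u ∈ Icc t₀ (t₀ + τ)) :
    reroute y t₀ τ z u = y t₀ + (u - t₀) • τ⁻¹ • (z - y t₀) := by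
  simp [reroute, min_eq_right hu.1, min_eq_left hu.2, max_eq_right hu.1]

theorem reroute_of_ge (hτ : 0 < τ) (hu : t₀ + τ ≤ u) : reroute y t₀ τ z u = z := by
  have hclamp : max t₀ (min u (t₀ + τ)) = t₀ + τ := by
    rw [min_eq_right hu, max_eq_right (by linarith)]
  simp [reroute, min_eq_right (by linarith : t₀ ≤ u), hclamp, smul_inv_smul₀ hτ.ne']

theorem deriv_reroute_of_mem_Ioo (hu : u ∈ Ioo t₀ (t₀ + τ)) :
    deriv (reroute y t₀ τ z) u = τ⁻¹ • (z - y t₀) := by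
  have hline : reroute y t₀ τ z =ᶠ[𝓝 u] fun v => y t₀ + (v - t₀) • τ⁻¹ • (z - y t₀) :=
    eventually_of_mem (Ioo_mem_nhds hu.1 hu.2) fun v hv =>
      reroute_of_mem_Icc (Ioo_subset_Icc_self hv)
  rw [hline.deriv_eq]
  simpa using (((hasDerivAt_id u).sub_const t₀).smul_const (τ⁻¹ • (z - y t₀))).const_add (y t₀)
    |>.deriv

theorem deriv_reroute_of_gt (hτ : 0 < τ) (hu : t₀ + τ < u) : deriv (reroute y t₀ τ z) u = 0 := by
  have hconst : reroute y t₀ τ z =ᶠ[𝓝 u] fun _ => z :=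
    eventually_of_mem (Ioi_mem_nhds hu) fun v hv => reroute_of_ge hτ (le_of_lt hv)
  rw [hconst.deriv_eq, deriv_const]

theorem LipschitzOnWith.exists_lipschitzOnWith_reroute {L : ℝ≥0} {a b : ℝ}
    (hy : LipschitzOnWith L y (Icc a b)) (ht₀ : a ≤ t₀) :
    ∃ L' : ℝ≥0, LipschitzOnWith L' (reroute y t₀ τ z) (Icc a b) := by
  have hhead : LipschitzOnWith (L * 1) (fun u => y (min u t₀)) (Icc a b) :=
    hy.comp (LipschitzWith.id.min_const t₀).lipschitzOnWith
      fun u hu => ⟨le_min hu.1 ht₀, (min_le_left _ _).trans hu.2⟩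
  have hclamp : LipschitzWith (1 + 0) fun u => max t₀ (min u (t₀ + τ)) - t₀ :=
    ((LipschitzWith.id.min_const _).const_max t₀).sub (LipschitzWith.const t₀)
  exact ⟨_, hhead.add ((ContinuousLinearMap.toSpanSingleton ℝ (τ⁻¹ • (z - y t₀))).lipschitz.comp
    hclamp).lipschitzOnWith⟩

end Reroute

section ExcessCost

variable {E P : Type*} [NormedAddCommGroup E] [NormedSpace ℝ E] [CompleteSpace E]
  [MeasurableSpace E] [BorelSpace E] [SecondCountableTopology E] [TopologicalSpace P]
  {F : E → P → ℝ} {M : ℝ} {xstar : E} {m : ℝ → P} {y : ℝ → E} {L : ℝ≥0} {t₀ T : ℝ}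

theorem integral_lagrangian_ge (hM : ∀ x μ, |F x μ| ≤ M) (hFx : ∀ μ, Continuous fun x => F x μ)
    (hFm : ∀ x, Continuous (F x)) (hxmin : ∀ z μ, F xstar μ ≤ F z μ)
    (hm : ContinuousOn m (Icc t₀ T)) (hy : LipschitzOnWith L y (Icc t₀ T)) {γr a b : ℝ}
    (hγ : ∀ u ∈ Ioc a b, γr ≤ F (y u) (m u) - F xstar (m u))
    (hta : t₀ ≤ a) (hab : a ≤ b) (hbT : b ≤ T) :
    (∫ u in t₀..T, F xstar (m u)) + γr * (b - a) ≤ ∫ u in t₀..T, lagrangian F m y u := by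
  have htT : t₀ ≤ T := hta.trans (hab.trans hbT)
  have hc : IntervalIntegrable (fun u => F xstar (m u)) volume t₀ T :=
    ((hFm xstar).comp_continuousOn hm).intervalIntegrable_of_Icc htT
  have hL := intervalIntegrable_lagrangian_s15 hM hFx hFm htT hm hy
  have hexcess : ∀ u, ‖deriv y u‖ ^ 2 / 2 ≤ lagrangian F m y u - F xstar (m u) := fun u => by
    unfold lagrangian; linarith [hxmin (y u) (m u)]
  have hgap : γr * (b - a) ≤ ∫ u in t₀..T, (lagrangian F m y u - F xstar (m u)) :=
    calc γr * (b - a) = ∫ _ in a..b, γr := by simp [mul_comm]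
      _ ≤ ∫ u in a..b, (lagrangian F m y u - F xstar (m u)) :=
        intervalIntegral.integral_mono_on_of_le_Ioo hab intervalIntegrable_const
          ((hL.sub hc).mono_set <| by
            rw [uIcc_of_le hab, uIcc_of_le htT]; exact Icc_subset_Icc hta hbT)
          fun u hu => by unfold lagrangian; linarith [hγ u ⟨hu.1, hu.2.le⟩, sq_nonneg ‖deriv y u‖]
      _ ≤ ∫ u in t₀..T, (lagrangian F m y u - F xstar (m u)) :=
        intervalIntegral.integral_mono_interval hta hab hbT
          (ae_of_all _ fun u => (by positivity : (0 : ℝ) ≤ _).trans (hexcess u)) (hL.sub hc)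
  rw [intervalIntegral.integral_sub hL hc] at hgap
  linarith

theorem integral_lagrangian_reroute_le (hM : ∀ x μ, |F x μ| ≤ M)
    (hFx : ∀ μ, Continuous fun x => F x μ) (hFm : ∀ x, Continuous (F x))
    (hm : ContinuousOn m (Icc t₀ T)) (hy : LipschitzOnWith L y (Icc t₀ T)) {τ V : ℝ}
    (hτ : 0 < τ) (hτT : t₀ + τ ≤ T) (hreach : ‖xstar - y t₀‖ ≤ V * τ) :
    ∫ u in t₀..T, lagrangian F m (reroute y t₀ τ xstar) u
      ≤ (∫ u in t₀..T, F xstar (m u)) + (V ^ 2 / 2 + 2 * M) * τ := by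
  set w := reroute y t₀ τ xstar
  obtain ⟨L', hw⟩ := hy.exists_lipschitzOnWith_reroute (τ := τ) (z := xstar) le_rfl
  have hl : ∀ {a b}, t₀ ≤ a → a ≤ b → b ≤ T → IntervalIntegrable (lagrangian F m w) volume a b :=
    fun hta hab hbT => intervalIntegrable_lagrangian_s15 hM hFx hFm hab
      (hm.mono (Icc_subset_Icc hta hbT)) (hw.mono (Icc_subset_Icc hta hbT))
  have hc : ∀ {a b}, t₀ ≤ a → a ≤ b → b ≤ T →
      IntervalIntegrable (fun u => F xstar (m u)) volume a b := fun hta hab hbT =>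
    ((hFm xstar).comp_continuousOn (hm.mono (Icc_subset_Icc hta hbT))).intervalIntegrable_of_Icc hab
  have hint : ∀ {a b}, t₀ ≤ a → a ≤ b → b ≤ T →
      IntervalIntegrable (fun u => lagrangian F m w u - F xstar (m u)) volume a b :=
    fun hta hab hbT => (hl hta hab hbT).sub (hc hta hab hbT)
  have hspeed : ‖τ⁻¹ • (xstar - y t₀)‖ ^ 2 ≤ V ^ 2 := by
    have hle : ‖τ⁻¹ • (xstar - y t₀)‖ ≤ V := by
      rwa [norm_smul, norm_inv, Real.norm_of_nonneg hτ.le, inv_mul_le_iff₀ hτ, mul_comm]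
    exact pow_le_pow_left₀ (norm_nonneg _) hle 2
  have hmove : ∫ u in t₀..t₀ + τ, (lagrangian F m w u - F xstar (m u))
      ≤ ∫ _ in t₀..t₀ + τ, (V ^ 2 / 2 + 2 * M) :=
    intervalIntegral.integral_mono_on_of_le_Ioo (by linarith) (hint le_rfl (by linarith) hτT)
      intervalIntegrable_const fun u hu => by
        have hF := abs_le.1 (hM (w u) (m u))
        have hF' := abs_le.1 (hM xstar (m u))
        rw [lagrangian, deriv_reroute_of_mem_Ioo hu]
        linarith
  have hrest : ∫ u in t₀ + τ..T, (lagrangian F m w u - F xstar (m u)) ≤ ∫ _ in t₀ + τ..T, (0 : ℝ) :=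
    intervalIntegral.integral_mono_on_of_le_Ioo hτT (hint (by linarith) hτT le_rfl)
      intervalIntegrable_const fun u hu => by
        simp [lagrangian, w, deriv_reroute_of_gt hτ hu.1, reroute_of_ge hτ hu.1.le]
  have hsplit := intervalIntegral.integral_add_adjacent_intervals (hint le_rfl (by linarith) hτT)
    (hint (by linarith) hτT le_rfl)
  rw [intervalIntegral.integral_sub (hl le_rfl (by linarith) le_rfl)
    (hc le_rfl (by linarith) le_rfl)] at hsplit
  simp only [intervalIntegral.integral_const, smul_eq_mul, mul_zero, add_sub_cancel_left]
    at hmove hrest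
  linarith

end ExcessCost

section Minimizers

variable {n : ℕ} {F : En n → Pn n → ℝ} {M : ℝ} {xstar x : En n} {m : ℝ → Pn n} {T : ℝ}
  {y : ℝ → En n}

def IsMinimizingCurve (F : En n → Pn n → ℝ) (m : ℝ → Pn n) (T : ℝ) (x : En n) (y : ℝ → En n) :
    Prop :=
  Adm 0 T x y ∧ ∀ w, Adm 0 T x w → action F m 0 T y ≤ action F m 0 T w

theorem IsMinimizingCurve.integral_lagrangian_le (hM : ∀ x μ, |F x μ| ≤ M)
    (hFx : ∀ μ, Continuous fun x => F x μ) (hFm : ∀ x, Continuous (F x))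
    (hm : ContinuousOn m (Icc 0 T)) (hy : IsMinimizingCurve F m T x y) {w : ℝ → En n}
    (hw : Adm 0 T x w) {t₀ : ℝ} (hwy : ∀ u ≤ t₀, w u = y u) (ht₀ : t₀ ∈ Icc 0 T) :
    ∫ u in t₀..T, lagrangian F m y u ≤ ∫ u in t₀..T, lagrangian F m w u := by
  have hsplit : ∀ v, Adm 0 T x v → action F m 0 T v =
      (∫ u in 0..t₀, lagrangian F m v u) + ∫ u in t₀..T, lagrangian F m v u := by
    rintro v ⟨⟨L, hv⟩, -⟩
    exact (intervalIntegral.integral_add_adjacent_intervals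
      (intervalIntegrable_lagrangian_s15 hM hFx hFm ht₀.1 (hm.mono (Icc_subset_Icc_right ht₀.2))
        (hv.mono (Icc_subset_Icc_right ht₀.2)))
      (intervalIntegrable_lagrangian_s15 hM hFx hFm ht₀.2 (hm.mono (Icc_subset_Icc_left ht₀.1))
        (hv.mono (Icc_subset_Icc_left ht₀.1)))).symm
  have hhead : ∫ u in 0..t₀, lagrangian F m w u = ∫ u in 0..t₀, lagrangian F m y u :=
    intervalIntegral.integral_congr_Ioo_of_le ht₀.1 fun u hu => by
      have hwy' : w =ᶠ[𝓝 u] y := eventually_of_mem (Iio_mem_nhds hu.2) fun v hv => hwy v hv.le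
      rw [lagrangian, lagrangian, hwy'.deriv_eq, hwy u hu.2.le]
  have hcmp := hy.2 w hw
  rw [hsplit y hy.1, hsplit w hw, hhead] at hcmp
  linarith

theorem IsMinimizingCurve.mul_sub_le (hM : ∀ x μ, |F x μ| ≤ M)
    (hFx : ∀ μ, Continuous fun x => F x μ) (hFm : ∀ x, Continuous (F x))
    (hxmin : ∀ z μ, F xstar μ ≤ F z μ) (hm : ContinuousOn m (Icc 0 T))
    (hy : IsMinimizingCurve F m T x y) {t₀ τ V : ℝ} (ht₀ : 0 ≤ t₀) (hτ : 0 < τ)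
    (hτT : t₀ + τ ≤ T) (hreach : ‖xstar - y t₀‖ ≤ V * τ) {γr a b : ℝ}
    (hγ : ∀ u ∈ Ioc a b, γr ≤ F (y u) (m u) - F xstar (m u))
    (hta : t₀ ≤ a) (hab : a ≤ b) (hbT : b ≤ T) :
    γr * (b - a) ≤ (V ^ 2 / 2 + 2 * M) * τ := by
  obtain ⟨⟨L, hL⟩, hy0⟩ := hy.1
  have htT : Icc t₀ T ⊆ Icc 0 T := Icc_subset_Icc_left ht₀
  have hw : Adm 0 T x (reroute y t₀ τ xstar) :=
    ⟨hL.exists_lipschitzOnWith_reroute ht₀, (reroute_of_le ht₀).trans hy0⟩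
  have htail := hy.integral_lagrangian_le hM hFx hFm hm hw (fun u hu => reroute_of_le hu)
    ⟨ht₀, by linarith⟩
  have hlow := integral_lagrangian_ge hM hFx hFm hxmin (hm.mono htT) (hL.mono htT) hγ hta hab hbT
  have hup := integral_lagrangian_reroute_le hM hFx hFm (hm.mono htT) (hL.mono htT) hτ hτT hreach
  linarith

theorem IsMinimizingCurve.exists_dist_le (hM : ∀ x μ, |F x μ| ≤ M)
    (hFx : ∀ μ, Continuous fun x => F x μ) (hFm : ∀ x, Continuous (F x))
    (hxmin : ∀ z μ, F xstar μ ≤ F z μ) {γ : ℝ → ℝ}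
    (hγ : ∀ r, 0 < r → ∀ z μ, r < dist z xstar → γ r ≤ F z μ - F xstar μ)
    (hm : ContinuousOn m (Icc 0 T)) (hy : IsMinimizingCurve F m T x y) {D r T₀ : ℝ}
    (hx : dist x xstar ≤ D) (hr : 0 < r) (hT₀ : D ^ 2 / 2 + 2 * M < γ r * T₀) (h1T : 1 ≤ T)
    (h0T₀ : 0 ≤ T₀) (hT₀T : T₀ ≤ T) :
    ∃ t₀ ∈ Icc 0 T₀, dist (y t₀) xstar ≤ r := by
  by_contra! hfar
  have hgap := hy.mul_sub_le hM hFx hFm hxmin hm le_rfl one_pos (by linarith) (V := D)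
    (by rwa [mul_one, hy.1.2, ← dist_eq_norm'])
    (fun u hu => hγ r hr _ _ (hfar u ⟨hu.1.le, hu.2⟩)) le_rfl h0T₀ hT₀T
  linarith

theorem IsMinimizingCurve.dist_le (hM : ∀ x μ, |F x μ| ≤ M)
    (hFx : ∀ μ, Continuous fun x => F x μ) (hFm : ∀ x, Continuous (F x))
    (hxmin : ∀ z μ, F xstar μ ≤ F z μ) {γ : ℝ → ℝ}
    (hγ : ∀ r, 0 < r → ∀ z μ, r < dist z xstar → γ r ≤ F z μ - F xstar μ)
    {r : ℝ} (hγr : 0 < γ r) (hm : ContinuousOn m (Icc 0 T)) (hy : IsMinimizingCurve F m T x y)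
    {L : ℝ≥0} (hL : LipschitzOnWith L y (Icc 0 T)) {t₀ τ t : ℝ} (ht₀ : 0 ≤ t₀) (hτ : 0 < τ)
    (hτr : τ ≤ r) (hreach : dist (y t₀) xstar ≤ τ) (hτT : t₀ + τ ≤ T) (ht₀t : t₀ ≤ t)
    (htT : t ≤ T) :
    dist (y t) xstar ≤ r + L * (1 / 2 + 2 * M) / γ r * τ := by
  have hr : 0 < r := hτ.trans_le hτr
  obtain ⟨g, hg, hgr, hfar⟩ := exists_le_forall_lt_of_continuousOn (f := fun u => dist (y u) xstar)
    (fun u hu => (hL.continuousOn.mono (Icc_subset_Icc ht₀ htT) u hu).dist continuousWithinAt_const)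
    ht₀t (hreach.trans hτr)
  have hgap : γ r * (t - g) ≤ (1 ^ 2 / 2 + 2 * M) * τ :=
    hy.mul_sub_le hM hFx hFm hxmin hm ht₀ hτ hτT (by rwa [one_mul, ← dist_eq_norm'])
      (fun u hu => hγ r hr _ _ (hfar u hu)) hg.1 hg.2 htT
  have hmove : dist (y t) (y g) ≤ L * (t - g) := by
    simpa [Real.dist_eq, abs_of_nonneg (sub_nonneg.2 hg.2)] using
      hL.dist_le_mul t ⟨ht₀.trans ht₀t, htT⟩ g ⟨ht₀.trans hg.1, hg.2.trans htT⟩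
  have hlen : t - g ≤ (1 / 2 + 2 * M) / γ r * τ := by
    rw [div_mul_eq_mul_div, le_div_iff₀ hγr]
    linarith
  calc dist (y t) xstar ≤ dist (y t) (y g) + dist (y g) xstar := dist_triangle _ _ _
    _ ≤ L * ((1 / 2 + 2 * M) / γ r * τ) + r :=
      add_le_add (hmove.trans (mul_le_mul_of_nonneg_left hlen L.2)) hgr
    _ = r + L * (1 / 2 + 2 * M) / γ r * τ := by ring

end Minimizers

theorem exists_forall_dist_le {n : ℕ} {F : En n → Pn n → ℝ} {M : ℝ} {xstar : En n}
    (hM : ∀ x μ, |F x μ| ≤ M) (hFx : ∀ μ, Continuous fun x => F x μ)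
    (hFm : ∀ x, Continuous (F x)) (hxmin : ∀ z μ, F xstar μ ≤ F z μ) {γ : ℝ → ℝ}
    (hγ_pos : ∀ r, 0 < r → 0 < γ r)
    (hγ : ∀ r, 0 < r → ∀ z μ, r < dist z xstar → γ r ≤ F z μ - F xstar μ)
    (L : ℝ≥0) (D : ℝ) {ε : ℝ} (hε : 0 < ε) :
    ∃ T₀, ∀ (T : ℝ) (m : ℝ → Pn n) (x : En n) (y : ℝ → En n), ContinuousOn m (Icc 0 T) →
      IsMinimizingCurve F m T x y → LipschitzOnWith L y (Icc 0 T) → dist x xstar ≤ D →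
      ∀ t ∈ Icc T₀ T, dist (y t) xstar ≤ ε := by
  have hM0 : 0 ≤ M := (abs_nonneg _).trans (hM xstar (Classical.arbitrary _))
  -- `r` makes the error term `K * r` of `IsMinimizingCurve.dist_le` at most `ε / 2`; staying
  -- `r`-far from `xstar` up to time `T₁` would cost more than going straight to `xstar`.
  set K := L * (1 / 2 + 2 * M) / γ (ε / 2)
  have hK : 0 ≤ K := div_nonneg (by positivity) (hγ_pos _ (by linarith)).le
  set r := min (ε / 2) (ε / 2 / (K + 1))
  have hr : 0 < r := lt_min (by linarith) (by positivity)
  have hKr : K * r ≤ ε / 2 :=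
    calc K * r ≤ K * (ε / 2 / (K + 1)) := mul_le_mul_of_nonneg_left (min_le_right _ _) hK
      _ ≤ ε / 2 := by rw [← mul_div_assoc, div_le_iff₀ (by linarith)]; nlinarith
  set T₁ := (D ^ 2 / 2 + 2 * M) / γ r + 1
  have hγr := hγ_pos r hr
  have hT₁ : D ^ 2 / 2 + 2 * M < γ r * T₁ := by
    rw [mul_add, mul_div_cancel₀ _ hγr.ne', mul_one]; linarith
  have h1T₁ : 1 ≤ T₁ := le_add_of_nonneg_left (div_nonneg (by positivity) hγr.le)
  refine ⟨T₁ + r, fun T m x y hm hy hL hx t ht => ?_⟩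
  obtain ⟨t₀, ht₀, hnear⟩ := hy.exists_dist_le hM hFx hFm hxmin hγ hm hx hr hT₁
    (by linarith [ht.1, ht.2]) (by linarith) (by linarith [ht.1, ht.2])
  calc dist (y t) xstar ≤ ε / 2 + K * r :=
        hy.dist_le hM hFx hFm hxmin hγ (hγ_pos _ (by linarith)) hm hL ht₀.1 hr (min_le_left _ _)
          hnear (by linarith [ht₀.2, ht.1, ht.2]) (by linarith [ht₀.2, ht.1]) ht.2
    _ ≤ ε := by linarith

theorem ae_mem_of_msupp_subset {n : ℕ} {μ : Pn n} {K : Set (En n)} (hK : msupp μ ⊆ K) :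
    ∀ᵐ x ∂(μ : Measure (En n)), x ∈ K := by
  have hsupp : msupp μ = (μ : Measure (En n)).support := by
    ext x
    simp [msupp, Measure.mem_support_iff_forall, pos_iff_ne_zero]
  exact measure_mono_null (compl_subset_compl.2 (hsupp ▸ hK)) Measure.measure_compl_support

theorem integral_norm_sub_le_of_eq_map {n : ℕ} {m₀ μ : Pn n} {K : Set (En n)}
    (hK : msupp m₀ ⊆ K) {f : En n → En n}
    (hμ : (μ : Measure (En n)) = (m₀ : Measure (En n)).map f) {z : En n} {ε : ℝ}
    (hf : ∀ x ∈ K, ‖f x - z‖ ≤ ε) :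
    ∫ x, ‖x - z‖ ∂(μ : Measure (En n)) ≤ ε := by
  have hfm : AEMeasurable f m₀ := .of_map_ne_zero (hμ ▸ IsProbabilityMeasure.ne_zero _)
  have hle : ∀ᵐ x ∂(μ : Measure (En n)), ‖x - z‖ ≤ ε := by
    rw [hμ, ae_map_iff hfm (measurableSet_le (by fun_prop) measurable_const)]
    filter_upwards [ae_mem_of_msupp_subset hK] with x hx using hf x hx
  calc ∫ x, ‖x - z‖ ∂(μ : Measure (En n)) ≤ ∫ _, ε ∂(μ : Measure (En n)) :=
        integral_mono_of_nonneg (ae_of_all _ fun _ => norm_nonneg _) (integrable_const ε) hle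
    _ = ε := by simp

theorem convergence_to_Dirac_mass_general {n : ℕ} (F : En n → Pn n → ℝ)
    (M : ℝ) (hM : ∀ (x : En n) (μ : Pn n), |F x μ| ≤ M)
    (hFx : ∀ μ : Pn n, Continuous fun x => F x μ)
    (hFm : ∀ x : En n, Continuous fun μ : Pn n => F x μ)
    (𝒜 : Set (En n))
    (hargmin : ∀ μ : Pn n, {z : En n | ∀ w : En n, F z μ ≤ F w μ} = 𝒜)
    (γ : ℝ → ℝ) (hγ_pos : ∀ r : ℝ, 0 < r → 0 < γ r)
    (hγ : ∀ r : ℝ, 0 < r → ∀ (z : En n) (μ : Pn n),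
      r < Metric.infDist z 𝒜 → γ r ≤ F z μ - cmin F μ)
    (K₀ : Set (En n)) (hK₀ : IsCompact K₀)
    (m₀ : Pn n) (hm₀ : msupp m₀ ⊆ K₀)
    (m : ℝ → ℝ → Pn n) (Φ : ℝ → En n → ℝ → En n)
    (heq : ∀ T : ℝ, 1 < T → IsEquilibrium F K₀ m₀ T (m T) (Φ T))
    (χ' : ℝ)
    (hLip : ∀ T : ℝ, 1 < T → ∀ x ∈ K₀,
      LipschitzOnWith (Real.toNNReal χ') (Φ T x) (Set.Icc 0 T))
    (xstar : En n) (hsingle : 𝒜 = {xstar}) :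
    ∀ s₀ ∈ Set.Ioc (0:ℝ) 1, ∀ ε : ℝ, 0 < ε → ∃ T₁ : ℝ,
      ∀ T : ℝ, T₁ ≤ T → 1 < T → ∀ s ∈ Set.Icc s₀ 1,
        (∫ x, ‖x - xstar‖ ∂((m T (s * T)) : Measure (En n))) ≤ ε := by
  intro s₀ hs₀ ε hε
  have hxmin : ∀ z μ, F xstar μ ≤ F z μ := fun z μ => by
    have hmem : xstar ∈ {z | ∀ w, F z μ ≤ F w μ} := by rw [hargmin, hsingle]; rfl
    exact hmem z
  have hcmin : ∀ μ, cmin F μ = F xstar μ := fun μ =>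
    (show IsLeast (range fun z => F z μ) (F xstar μ) from
      ⟨⟨xstar, rfl⟩, by rintro _ ⟨z, rfl⟩; exact hxmin z μ⟩).isGLB.ciInf_eq
  have hγ' : ∀ r, 0 < r → ∀ z μ, r < dist z xstar → γ r ≤ F z μ - F xstar μ := by
    simpa only [hsingle, infDist_singleton, hcmin] using hγ
  obtain ⟨D, hD⟩ := hK₀.isBounded.subset_closedBall xstar
  obtain ⟨T₀, hT₀⟩ := exists_forall_dist_le hM hFx hFm hxmin hγ_pos hγ' (Real.toNNReal χ') D hε
  refine ⟨T₀ / s₀, fun T hT hT1 s hs => ?_⟩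
  obtain ⟨hmc, hopt, hmap⟩ := heq T hT1
  have hsT : s * T ∈ Icc T₀ T :=
    ⟨((div_le_iff₀ hs₀.1).1 hT).trans (by nlinarith [hs.1]), by nlinarith [hs.2]⟩
  refine integral_norm_sub_le_of_eq_map hm₀ (hmap _ ⟨by nlinarith [hs₀.1, hs.1], hsT.2⟩)
    fun x hx => ?_
  rw [← dist_eq_norm]
  exact hT₀ T (m T) x (Φ T x) hmc (hopt x hx) (hLip T hT1 x hx) (hD hx) _ hsT

/-- **Convergence to the Dirac mass when `𝒜` is a singleton.** Under the standing assumptions,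
if `𝒜 = {x_*}` then `∫ |x − x_*| d(m^T(sT)) → 0` as `T → ∞`, uniformly for `s ∈ [s₀,1]`, for
every `s₀ ∈ (0,1]`; this integral is the Kantorovich–Rubinstein distance
`d₁(m^T(sT), δ_{x_*})`, so `m^T(sT) → δ_{x_*}` in `d₁`, locally uniformly in `s ∈ (0,1]`. -/
theorem convergence_to_Dirac_mass {n : ℕ} (F : En n → Pn n → ℝ)
    (M : ℝ) (hM : ∀ (x : En n) (μ : Pn n), |F x μ| ≤ M)
    (hFx : ∀ μ : Pn n, Continuous fun x => F x μ)
    (hFm : ∀ x : En n, Continuous fun μ : Pn n => F x μ)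
    (𝒜 : Set (En n)) (hA_ne : 𝒜.Nonempty) (hA_closed : IsClosed 𝒜)
    (hargmin : ∀ μ : Pn n, {z : En n | ∀ w : En n, F z μ ≤ F w μ} = 𝒜)
    (γ : ℝ → ℝ) (hγ_pos : ∀ r : ℝ, 0 < r → 0 < γ r)
    (hγ : ∀ r : ℝ, 0 < r → ∀ (z : En n) (μ : Pn n),
      r < Metric.infDist z 𝒜 → γ r ≤ F z μ - cmin F μ)
    (K₀ : Set (En n)) (hK₀ : IsCompact K₀)
    (m₀ : Pn n) (hm₀ : msupp m₀ ⊆ K₀)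
    (m : ℝ → ℝ → Pn n) (Φ : ℝ → En n → ℝ → En n)
    (heq : ∀ T : ℝ, 1 < T → IsEquilibrium F K₀ m₀ T (m T) (Φ T))
    (χ' : ℝ) (hχ' : 0 < χ')
    (hLip : ∀ T : ℝ, 1 < T → ∀ x ∈ K₀,
      LipschitzOnWith (Real.toNNReal χ') (Φ T x) (Set.Icc 0 T))
    (xstar : En n) (hsingle : 𝒜 = {xstar}) :
    ∀ s₀ ∈ Set.Ioc (0:ℝ) 1, ∀ ε : ℝ, 0 < ε → ∃ T₁ : ℝ,
      ∀ T : ℝ, T₁ ≤ T → 1 < T → ∀ s ∈ Set.Icc s₀ 1,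
        (∫ x, ‖x - xstar‖ ∂((m T (s * T)) : Measure (En n))) ≤ ε :=
  convergence_to_Dirac_mass_general F M hM hFx hFm 𝒜 hargmin γ hγ_pos hγ K₀ hK₀ m₀ hm₀ m Φ heq χ'
    hLip xstar hsingle
end
end
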